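/- arXiv:2111.12564 — 4 statements merged into one kernel-verified Lean document; each statement's English description precedes it below -/
import Mathlib

section
/- Let ν > 0, σ > 0 and C ∈ ℝ. Then E[ν̂ | R̃_T > C], viewed as a function of T > 0, tends to ν as T → +∞. -/
open MeasureTheory ProbabilityTheory Set

/-- `E[ν̂ | R̃_T > C]` as a function of the horizon `T`, where the return
`R̃_T ∼ N(νT, σ²T)` and `ν̂ = R̃_T / T`. -/
noncomputable def condExpDriftGt (ν σ C T : ℝ) : ℝ :=
  (∫ y in Ioi C, y / T ∂(gaussianReal (ν * T) (Real.toNNReal (σ ^ 2 * T)))) /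
    ((gaussianReal (ν * T) (Real.toNNReal (σ ^ 2 * T))) (Ioi C)).toReal

open Filter Real Topology
open scoped NNReal ENNReal

namespace CondExpAux

variable {μ : ℝ} {v : ℝ≥0}

lemma coe_pos (hv : v ≠ 0) : (0 : ℝ) < v :=
  NNReal.coe_pos.mpr (pos_iff_ne_zero.mpr hv)

lemma hasDerivAt_pdf (hv : v ≠ 0) (x : ℝ) :
    HasDerivAt (fun y => -(v : ℝ) * gaussianPDFReal μ v y)
      ((x - μ) * gaussianPDFReal μ v x) x := by
  have hv' : (0:ℝ) < v := coe_pos hv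
  have h1 : HasDerivAt (fun y : ℝ => -(y - μ)^2 / (2 * (v:ℝ))) (-(x - μ) / (v:ℝ)) x := by
    have h0 : HasDerivAt (fun y : ℝ => (y - μ)^2) (2 * (x - μ)) x := by
      simpa using ((hasDerivAt_id x).sub_const μ).fun_pow 2
    have := (h0.neg).div_const (2 * (v:ℝ))
    refine this.congr_deriv ?_
    field_simp
  have h2 := (Real.hasDerivAt_exp (-(x - μ)^2 / (2 * (v:ℝ)))).comp x h1
  have h3 := h2.const_mul (-(v:ℝ) * (Real.sqrt (2 * π * v))⁻¹)
  have hfun : (fun y => -(v:ℝ) * gaussianPDFReal μ v y)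
      = fun y => -(v:ℝ) * (Real.sqrt (2 * π * v))⁻¹ *
        (rexp ∘ fun y : ℝ => -(y - μ)^2 / (2 * (v:ℝ))) y := by
    funext y
    simp only [gaussianPDFReal, Function.comp]
    ring
  rw [hfun]
  refine h3.congr_deriv ?_
  simp only [gaussianPDFReal]
  field_simp

lemma tendsto_pdf_atTop (hv : v ≠ 0) :
    Tendsto (gaussianPDFReal μ v) atTop (𝓝 0) := by
  have hv' : (0:ℝ) < v := coe_pos hv
  have h0 : Tendsto (fun y : ℝ => y - μ) atTop atTop := by
    simpa [sub_eq_add_neg] using tendsto_atTop_add_const_right atTop (-μ) tendsto_id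
  have h1 : Tendsto (fun y : ℝ => (y - μ)^2) atTop atTop :=
    (tendsto_pow_atTop two_ne_zero).comp h0
  have h2 : Tendsto (fun y : ℝ => -(y - μ)^2 / (2 * (v:ℝ))) atTop atBot := by
    apply Tendsto.atBot_div_const (by positivity)
    exact tendsto_neg_atTop_atBot.comp h1
  have h3 := (Real.tendsto_exp_atBot.comp h2).const_mul ((Real.sqrt (2 * π * v))⁻¹)
  simpa [gaussianPDFReal_def, Function.comp] using h3

lemma tendsto_pdf_atBot (hv : v ≠ 0) :
    Tendsto (gaussianPDFReal μ v) atBot (𝓝 0) := by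
  have hv' : (0:ℝ) < v := coe_pos hv
  have h0 : Tendsto (fun y : ℝ => μ - y) atBot atTop := by
    simpa [sub_eq_add_neg] using
      tendsto_atTop_add_const_left atBot μ tendsto_neg_atBot_atTop
  have h1 : Tendsto (fun y : ℝ => (y - μ)^2) atBot atTop := by
    have := (tendsto_pow_atTop two_ne_zero).comp h0
    refine this.congr fun y => ?_
    simp only [Function.comp]
    ring
  have h2 : Tendsto (fun y : ℝ => -(y - μ)^2 / (2 * (v:ℝ))) atBot atBot := by
    apply Tendsto.atBot_div_const (by positivity)
    exact tendsto_neg_atTop_atBot.comp h1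
  have h3 := (Real.tendsto_exp_atBot.comp h2).const_mul ((Real.sqrt (2 * π * v))⁻¹)
  simpa [gaussianPDFReal_def, Function.comp] using h3

lemma integrable_sub_mul_pdf (hv : v ≠ 0) :
    Integrable (fun y => (y - μ) * gaussianPDFReal μ v y) := by
  have hv' : (0:ℝ) < v := coe_pos hv
  have hb : (0:ℝ) < (2*(v:ℝ))⁻¹ := by positivity
  have h := (integrable_mul_exp_neg_mul_sq hb).comp_sub_right μ
  have h2 := h.const_mul ((Real.sqrt (2 * π * v))⁻¹)
  refine h2.congr (Filter.Eventually.of_forall fun y => ?_)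
  have harg : -(2*(v:ℝ))⁻¹ * (y - μ)^2 = -(y - μ)^2 / (2 * (v:ℝ)) := by ring
  simp only [gaussianPDFReal, harg]
  ring

lemma setIntegral_sub_mul_pdf_Ioi (hv : v ≠ 0) (C : ℝ) :
    ∫ y in Ioi C, (y - μ) * gaussianPDFReal μ v y = v * gaussianPDFReal μ v C := by
  have h := integral_Ioi_of_hasDerivAt_of_tendsto' (a := C)
    (f := fun y => -(v:ℝ) * gaussianPDFReal μ v y)
    (f' := fun y => (y - μ) * gaussianPDFReal μ v y)
    (fun x _ => hasDerivAt_pdf hv x)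
    (integrable_sub_mul_pdf hv).integrableOn
    (by simpa using (tendsto_pdf_atTop (μ := μ) hv).const_mul (-(v:ℝ)))
  rw [h]; ring

lemma setIntegral_sub_mul_pdf_Iic (hv : v ≠ 0) (C : ℝ) :
    ∫ y in Iic C, (μ - y) * gaussianPDFReal μ v y = v * gaussianPDFReal μ v C := by
  have hd : ∀ x : ℝ, HasDerivAt (fun y => (v:ℝ) * gaussianPDFReal μ v y)
      ((μ - x) * gaussianPDFReal μ v x) x := by
    intro x
    have h := (hasDerivAt_pdf (μ := μ) hv x).fun_neg
    simp only [neg_mul, neg_neg] at h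
    refine h.congr_deriv ?_
    ring
  have hint : Integrable (fun y => (μ - y) * gaussianPDFReal μ v y) := by
    have h := (integrable_sub_mul_pdf (μ := μ) (v := v) hv).neg
    refine h.congr (Filter.Eventually.of_forall fun y => ?_)
    simp only [Pi.neg_apply]
    ring
  have h := integral_Iic_of_hasDerivAt_of_tendsto (a := C)
    (f := fun y => (v:ℝ) * gaussianPDFReal μ v y)
    (f' := fun y => (μ - y) * gaussianPDFReal μ v y)
    (hd C).continuousAt.continuousWithinAt
    (fun x _ => hd x)
    hint.integrableOn
    (by simpa using (tendsto_pdf_atBot (μ := μ) hv).const_mul ((v:ℝ)))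
  rw [h]; ring

lemma measure_toReal (hv : v ≠ 0) (s : Set ℝ) (hs : MeasurableSet s) :
    ((gaussianReal μ v) s).toReal = ∫ y in s, gaussianPDFReal μ v y := by
  rw [gaussianReal_apply_eq_integral μ hv s, ENNReal.toReal_ofReal]
  exact setIntegral_nonneg hs fun y _ => gaussianPDFReal_nonneg μ v y

lemma setIntegral_gaussianReal (hv : v ≠ 0) (g : ℝ → ℝ) (s : Set ℝ) (hs : MeasurableSet s) :
    ∫ y in s, g y ∂(gaussianReal μ v) = ∫ y in s, gaussianPDFReal μ v y * g y := by
  rw [gaussianReal_of_var_ne_zero μ hv]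
  have hpdf : gaussianPDF μ v = fun x => ((Real.toNNReal (gaussianPDFReal μ v x) : ℝ≥0) : ℝ≥0∞) :=
    rfl
  rw [hpdf, setIntegral_withDensity_eq_setIntegral_smul
    (measurable_gaussianPDFReal μ v).real_toNNReal g hs]
  refine setIntegral_congr_fun hs fun y _ => ?_
  simp [NNReal.smul_def, Real.coe_toNNReal _ (gaussianPDFReal_nonneg μ v y)]

end CondExpAux


namespace CondExpAux

open Filter Real Topology
variable (ν σ C : ℝ)

/-- The pdf of `N(νT, σ²T)` as a function of `T` and the space variable. -/
noncomputable def pdfT (ν σ T y : ℝ) : ℝ :=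
  gaussianPDFReal (ν * T) (Real.toNNReal (σ ^ 2 * T)) y

lemma vT_pos (hσ : 0 < σ) {T : ℝ} (hT : 0 < T) : (0:ℝ) < σ ^ 2 * T := by positivity

lemma vT_ne (hσ : 0 < σ) {T : ℝ} (hT : 0 < T) : Real.toNNReal (σ ^ 2 * T) ≠ 0 := by
  simp only [ne_eq, Real.toNNReal_eq_zero, not_le]
  exact vT_pos σ hσ hT

lemma vT_coe (hσ : 0 < σ) {T : ℝ} (hT : 0 < T) :
    ((Real.toNNReal (σ ^ 2 * T)) : ℝ) = σ ^ 2 * T :=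
  Real.coe_toNNReal _ (vT_pos σ hσ hT).le

lemma condExpDriftGt_eq (hσ : 0 < σ) {T : ℝ} (hT : 0 < T) :
    condExpDriftGt ν σ C T =
      (σ ^ 2 * pdfT ν σ T C + ν * ∫ y in Ioi C, pdfT ν σ T y) /
        (∫ y in Ioi C, pdfT ν σ T y) := by
  have hvne := vT_ne σ hσ hT
  have hvcoe := vT_coe σ hσ hT
  rw [condExpDriftGt, measure_toReal hvne _ measurableSet_Ioi,
    setIntegral_gaussianReal hvne _ _ measurableSet_Ioi]
  have h2 : ∀ y ∈ Ioi C, gaussianPDFReal (ν*T) (Real.toNNReal (σ^2*T)) y * (y/T)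
      = (1/T) * ((y - ν*T) * gaussianPDFReal (ν*T) (Real.toNNReal (σ^2*T)) y)
        + ν * gaussianPDFReal (ν*T) (Real.toNNReal (σ^2*T)) y := by
    intro y _
    field_simp
    ring
  rw [setIntegral_congr_fun measurableSet_Ioi h2, integral_add
      (((integrable_sub_mul_pdf hvne).const_mul (1/T)).integrableOn)
      (((integrable_gaussianPDFReal _ _).const_mul ν).integrableOn),
    integral_const_mul, integral_const_mul, setIntegral_sub_mul_pdf_Ioi hvne C, hvcoe]
  simp only [pdfT]
  congr 1
  field_simp

lemma tendsto_sqrt_atTop' : Tendsto Real.sqrt atTop atTop :=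
  tendsto_atTop_atTop_of_monotone (fun _ _ h => Real.sqrt_le_sqrt h)
    fun b => ⟨b ^ 2, by rw [Real.sqrt_sq_eq_abs]; exact le_abs_self b⟩

lemma tendsto_inv_sqrt (hσ : 0 < σ) :
    Tendsto (fun T : ℝ => (Real.sqrt (2 * π * (σ ^ 2 * T)))⁻¹) atTop (𝓝 0) := by
  have h1 : Tendsto (fun T : ℝ => 2 * π * (σ ^ 2 * T)) atTop atTop := by
    have := Tendsto.const_mul_atTop (show (0:ℝ) < 2 * π * σ ^ 2 by positivity)
      (tendsto_id (α := ℝ))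
    refine this.congr fun T => by simp only [id_eq]; ring
  exact (tendsto_sqrt_atTop'.comp h1).inv_tendsto_atTop

lemma pdfT_le (hσ : 0 < σ) {T : ℝ} (hT : 0 < T) (y : ℝ) :
    pdfT ν σ T y ≤ (Real.sqrt (2 * π * (σ ^ 2 * T)))⁻¹ := by
  rw [pdfT, gaussianPDFReal, vT_coe σ hσ hT]
  have h1 : rexp (-(y - ν*T)^2 / (2 * (σ^2*T))) ≤ 1 := by
    rw [Real.exp_le_one_iff]
    apply div_nonpos_of_nonpos_of_nonneg
    · simpa using sq_nonneg (y - ν*T)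
    · positivity
  calc (Real.sqrt (2 * π * (σ^2*T)))⁻¹ * rexp (-(y - ν*T)^2 / (2 * (σ^2*T)))
      ≤ (Real.sqrt (2 * π * (σ^2*T)))⁻¹ * 1 :=
        mul_le_mul_of_nonneg_left h1 (by positivity)
    _ = (Real.sqrt (2 * π * (σ^2*T)))⁻¹ := mul_one _

lemma tendsto_pdfT_C (hσ : 0 < σ) :
    Tendsto (fun T : ℝ => pdfT ν σ T C) atTop (𝓝 0) := by
  apply squeeze_zero' (Filter.Eventually.of_forall fun T => gaussianPDFReal_nonneg _ _ _)
    ?_ (tendsto_inv_sqrt σ hσ)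
  filter_upwards [Filter.eventually_gt_atTop 0] with T hT
  exact pdfT_le ν σ hσ hT C

lemma tail_bound (hν : 0 < ν) (hσ : 0 < σ) {T : ℝ} (hT : 0 < T) (hT2 : C < ν * T) :
    ∫ y in Iic C, pdfT ν σ T y
      ≤ (ν * T - C)⁻¹ * (σ ^ 2 * T * (Real.sqrt (2 * π * (σ ^ 2 * T)))⁻¹) := by
  have hvne := vT_ne σ hσ hT
  have hvcoe := vT_coe σ hσ hT
  have hden : (0:ℝ) < ν * T - C := by linarith
  have hint : Integrable (fun y => (ν*T - y) * gaussianPDFReal (ν*T) (Real.toNNReal (σ^2*T)) y) := by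
    have h := (integrable_sub_mul_pdf (μ := ν*T) (v := Real.toNNReal (σ^2*T)) hvne).neg
    refine h.congr (Filter.Eventually.of_forall fun y => ?_)
    simp only [Pi.neg_apply]
    ring
  have hmono : ∫ y in Iic C, pdfT ν σ T y
      ≤ ∫ y in Iic C, (ν*T - C)⁻¹ * ((ν*T - y) * gaussianPDFReal (ν*T) (Real.toNNReal (σ^2*T)) y) := by
    refine setIntegral_mono_on (integrable_gaussianPDFReal _ _).integrableOn
      (hint.const_mul _).integrableOn measurableSet_Iic fun y hy => ?_
    have hy' : y ≤ C := hy
    have h1 : (1:ℝ) ≤ (ν*T - C)⁻¹ * (ν*T - y) := by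
      rw [← div_eq_inv_mul, le_div_iff₀ hden]
      linarith
    have h0 := gaussianPDFReal_nonneg (ν*T) (Real.toNNReal (σ^2*T)) y
    calc pdfT ν σ T y = 1 * gaussianPDFReal (ν*T) (Real.toNNReal (σ^2*T)) y := (one_mul _).symm
      _ ≤ ((ν*T - C)⁻¹ * (ν*T - y)) * gaussianPDFReal (ν*T) (Real.toNNReal (σ^2*T)) y :=
          mul_le_mul_of_nonneg_right h1 h0
      _ = (ν*T - C)⁻¹ * ((ν*T - y) * gaussianPDFReal (ν*T) (Real.toNNReal (σ^2*T)) y) := by ring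
  rw [integral_const_mul, setIntegral_sub_mul_pdf_Iic hvne C, hvcoe] at hmono
  refine hmono.trans ?_
  apply mul_le_mul_of_nonneg_left ?_ (by positivity)
  apply mul_le_mul_of_nonneg_left ?_ (by positivity)
  exact pdfT_le ν σ hσ hT C

lemma tendsto_tail_bound (hν : 0 < ν) (hσ : 0 < σ) :
    Tendsto (fun T : ℝ => (ν * T - C)⁻¹ * (σ ^ 2 * T * (Real.sqrt (2 * π * (σ ^ 2 * T)))⁻¹))
      atTop (𝓝 0) := by
  have hA : Tendsto (fun T : ℝ => σ ^ 2 * T / (ν * T - C)) atTop (𝓝 (σ ^ 2 / ν)) := by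
    have hA0 : Tendsto (fun T : ℝ => σ ^ 2 / (ν - C / T)) atTop (𝓝 (σ ^ 2 / ν)) := by
      have hC : Tendsto (fun T : ℝ => C / T) atTop (𝓝 0) := by
        simpa [div_eq_mul_inv] using (tendsto_inv_atTop_zero (𝕜 := ℝ)).const_mul C
      have h1 : Tendsto (fun T : ℝ => ν - C / T) atTop (𝓝 ν) := by
        simpa using tendsto_const_nhds.sub hC
      exact tendsto_const_nhds.div h1 hν.ne'
    refine hA0.congr' ?_
    filter_upwards [eventually_gt_atTop (max 0 (C/ν))] with T hT
    have hT0 : 0 < T := lt_of_le_of_lt (le_max_left _ _) hT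
    have hT1 : C < ν * T := by
      have := lt_of_le_of_lt (le_max_right 0 (C/ν)) hT
      calc C = ν * (C / ν) := by field_simp
        _ < ν * T := by exact mul_lt_mul_of_pos_left this hν
    have hden : ν - C / T = (ν * T - C) / T := by field_simp
    rw [hden, div_div_eq_mul_div]
  have hB := tendsto_inv_sqrt σ hσ
  have := hA.mul hB
  rw [mul_zero] at this
  refine this.congr fun T => by ring

lemma tendsto_D (hν : 0 < ν) (hσ : 0 < σ) :
    Tendsto (fun T : ℝ => ∫ y in Ioi C, pdfT ν σ T y) atTop (𝓝 1) := by
  have hI : Tendsto (fun T : ℝ => ∫ y in Iic C, pdfT ν σ T y) atTop (𝓝 0) := by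
    apply squeeze_zero' ?_ ?_ (tendsto_tail_bound ν σ C hν hσ)
    · exact Filter.Eventually.of_forall fun T =>
        setIntegral_nonneg measurableSet_Iic fun y _ => gaussianPDFReal_nonneg _ _ _
    · filter_upwards [eventually_gt_atTop (max 0 (C/ν))] with T hT
      have hT0 : 0 < T := lt_of_le_of_lt (le_max_left _ _) hT
      have hT1 : C < ν * T := by
        have := lt_of_le_of_lt (le_max_right 0 (C/ν)) hT
        calc C = ν * (C / ν) := by field_simp
          _ < ν * T := mul_lt_mul_of_pos_left this hν
      exact tail_bound ν σ C hν hσ hT0 hT1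
  have h1 : Tendsto (fun T : ℝ => 1 - ∫ y in Iic C, pdfT ν σ T y) atTop (𝓝 1) := by
    simpa using tendsto_const_nhds.sub hI
  refine h1.congr' ?_
  filter_upwards [eventually_gt_atTop 0] with T hT
  have hvne := vT_ne σ hσ hT
  have hsplit : (∫ y in Iic C, pdfT ν σ T y) + ∫ y in Ioi C, pdfT ν σ T y = 1 := by
    unfold pdfT
    rw [intervalIntegral.integral_Iic_add_Ioi (integrable_gaussianPDFReal _ _).integrableOn
      (integrable_gaussianPDFReal _ _).integrableOn]
    exact integral_gaussianPDFReal_eq_one _ hvne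
  linarith [hsplit]

end CondExpAux

/-- Proposition 2 (case `ν > 0`, upper-tail conditioning):
`E[ν̂ | R̃_T > C] → ν` as `T → +∞`. -/
theorem tendsto_condExpDriftGt_of_pos (ν σ C : ℝ) (hν : 0 < ν) (hσ : 0 < σ) :
    Filter.Tendsto (fun T : ℝ => condExpDriftGt ν σ C T) Filter.atTop (nhds ν) := by
  have hnum : Filter.Tendsto
      (fun T : ℝ => σ ^ 2 * CondExpAux.pdfT ν σ T C + ν * ∫ y in Ioi C, CondExpAux.pdfT ν σ T y)
      Filter.atTop (nhds ν) := by
    have := ((CondExpAux.tendsto_pdfT_C ν σ C hσ).const_mul (σ ^ 2)).add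
      ((CondExpAux.tendsto_D ν σ C hν hσ).const_mul ν)
    simpa using this
  have hfinal := hnum.div (CondExpAux.tendsto_D ν σ C hν hσ) one_ne_zero
  rw [div_one] at hfinal
  refine Filter.Tendsto.congr' ?_ hfinal
  filter_upwards [Filter.eventually_gt_atTop 0] with T hT
  exact (CondExpAux.condExpDriftGt_eq ν σ C hσ hT).symm
end

section
/- Let ν ≤ 0, σ > 0 and C ∈ ℝ. Then E[ν̂ | R̃_T > C], viewed as a function of T > 0, tends to 0 as T → +∞. -/
open MeasureTheory ProbabilityTheory Set Filter Real
open scoped NNReal ENNReal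

namespace CondDriftAux

variable {m : ℝ} {v : ℝ≥0}

lemma continuous_pdf (m : ℝ) (v : ℝ≥0) : Continuous (gaussianPDFReal m v) := by
  unfold gaussianPDFReal
  fun_prop

lemma hasDerivAt_neg_pdf (hv : 0 < (v : ℝ)) (y : ℝ) :
    HasDerivAt (fun x => -(v : ℝ) * gaussianPDFReal m v x)
      ((y - m) * gaussianPDFReal m v y) y := by
  have hu : HasDerivAt (fun x : ℝ => -(x - m) ^ 2 / (2 * (v : ℝ))) (-(y - m) / v) y := by
    have h1 : HasDerivAt (fun x : ℝ => (x - m)) 1 y := (hasDerivAt_id y).sub_const m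
    have h2 : HasDerivAt (fun x : ℝ => (x - m) ^ 2) (2 * (y - m)) y := by
      simpa using h1.fun_pow 2
    have h3 := (h2.neg).div_const (2 * (v : ℝ))
    refine h3.congr_deriv ?_
    field_simp
  have he := hu.exp
  have hc := he.const_mul ((Real.sqrt (2 * π * v))⁻¹)
  have h4 := hc.const_mul (-(v : ℝ))
  have hfun : (fun x => -(v : ℝ) * ((Real.sqrt (2 * π * v))⁻¹ * rexp (-(x - m) ^ 2 / (2 * (v:ℝ))))) =
      (fun x => -(v : ℝ) * gaussianPDFReal m v x) := rfl
  rw [hfun] at h4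
  have hv' : (v : ℝ) ≠ 0 := ne_of_gt hv
  refine h4.congr_deriv ?_
  unfold gaussianPDFReal
  field_simp

lemma tendsto_pdf_atTop (m : ℝ) (v : ℝ≥0) :
    Tendsto (gaussianPDFReal m v) atTop (nhds 0) := by
  unfold gaussianPDFReal
  rcases eq_or_ne (v : ℝ≥0) 0 with h | h
  · simp [h]
  have hv : 0 < (v : ℝ) := by positivity
  rw [show (0 : ℝ) = (Real.sqrt (2 * π * v))⁻¹ * 0 by ring]
  apply Tendsto.const_mul
  apply Real.tendsto_exp_atBot.comp
  have h1 : Tendsto (fun x : ℝ => (x - m) ^ 2) atTop atTop :=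
    (tendsto_pow_atTop two_ne_zero).comp (tendsto_atTop_add_const_right _ _ tendsto_id)
  have h2 : Tendsto (fun x : ℝ => -(x - m) ^ 2) atTop atBot := tendsto_neg_atTop_atBot.comp h1
  exact h2.atBot_div_const (by positivity)

lemma integrableOn_sub_mul_pdf (hv : 0 < (v : ℝ)) (a : ℝ) :
    IntegrableOn (fun y => (y - m) * gaussianPDFReal m v y) (Ioi a) := by
  have htend : Tendsto (fun x => -(v : ℝ) * gaussianPDFReal m v x) atTop (nhds 0) := by
    rw [show (0 : ℝ) = -(v : ℝ) * 0 by ring]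
    exact (tendsto_pdf_atTop m v).const_mul _
  have hIm : IntegrableOn (fun y => (y - m) * gaussianPDFReal m v y) (Ioi m) := by
    refine integrableOn_Ioi_deriv_of_nonneg' (fun x _ => hasDerivAt_neg_pdf hv x) ?_ htend
    intro x hx
    exact mul_nonneg (by linarith [hx.out]) (gaussianPDFReal_nonneg m v x)
  rcases le_or_gt a m with h | h
  · rw [← Ioc_union_Ioi_eq_Ioi h, integrableOn_union]
    exact ⟨((continuous_id.sub continuous_const).mul (continuous_pdf m v)).integrableOn_Ioc, hIm⟩
  · exact hIm.mono_set (Ioi_subset_Ioi h.le)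

lemma integral_sub_mul_pdf (hv : 0 < (v : ℝ)) (a : ℝ) :
    ∫ y in Ioi a, (y - m) * gaussianPDFReal m v y = (v : ℝ) * gaussianPDFReal m v a := by
  have htend : Tendsto (fun x => -(v : ℝ) * gaussianPDFReal m v x) atTop (nhds 0) := by
    rw [show (0 : ℝ) = -(v : ℝ) * 0 by ring]
    exact (tendsto_pdf_atTop m v).const_mul _
  have h := integral_Ioi_of_hasDerivAt_of_tendsto'
    (fun x _ => hasDerivAt_neg_pdf hv x) (integrableOn_sub_mul_pdf hv a) htend
  rw [h]; ring

lemma tail_pos (hv : v ≠ 0) (a : ℝ) : 0 < ∫ y in Ioi a, gaussianPDFReal m v y := by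
  rw [setIntegral_pos_iff_support_of_nonneg_ae (ae_of_all _ (gaussianPDFReal_nonneg m v))
    ((integrable_gaussianPDFReal m v).integrableOn)]
  have hs : Function.support (gaussianPDFReal m v) = univ := by
    ext x; simp [Function.mem_support, (gaussianPDFReal_pos m v x hv).ne']
  rw [hs, univ_inter]
  simp [Real.volume_Ioi]

lemma tail_le (hv : 0 < (v : ℝ)) {a : ℝ} (ha : m < a) :
    (a - m) * ∫ y in Ioi a, gaussianPDFReal m v y ≤ (v : ℝ) * gaussianPDFReal m v a := by
  rw [← integral_const_mul, ← integral_sub_mul_pdf hv a]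
  apply setIntegral_mono_on
  · exact ((integrable_gaussianPDFReal m v).integrableOn).const_mul _
  · exact integrableOn_sub_mul_pdf hv a
  · exact measurableSet_Ioi
  · intro y hy
    exact mul_le_mul_of_nonneg_right (by linarith [hy.out]) (gaussianPDFReal_nonneg m v y)

lemma le_tail (hv : 0 < (v : ℝ)) {a : ℝ} (ha : m < a) :
    (v : ℝ) * gaussianPDFReal m v a ≤
      ((a - m) + (v : ℝ) / (a - m)) * ∫ y in Ioi a, gaussianPDFReal m v y := by
  set p := gaussianPDFReal m v with hp
  set D := ∫ y in Ioi a, p y with hD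
  have ham : (0 : ℝ) < a - m := by linarith
  have hderiv : ∀ x ∈ Ici a, HasDerivAt (fun y => -(v : ℝ) * p y / (y - m))
      (p x + (v : ℝ) * p x / (x - m) ^ 2) x := by
    intro x hx
    have hxm : x - m ≠ 0 := sub_ne_zero.mpr (lt_of_lt_of_le ha hx.out).ne'
    have h1 := (hasDerivAt_neg_pdf (m := m) hv x).div ((hasDerivAt_id x).sub_const m) hxm
    refine h1.congr_deriv ?_
    simp only [id, hp]
    field_simp
    ring
  have htend : Tendsto (fun y => -(v : ℝ) * p y / (y - m)) atTop (nhds 0) := by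
    have h1 : Tendsto (fun y : ℝ => (y - m)⁻¹) atTop (nhds 0) := by
      have := tendsto_inv_atTop_zero.comp (tendsto_atTop_add_const_right atTop (-m) tendsto_id)
      simpa [Function.comp_def, sub_eq_add_neg] using this
    have h2 := ((tendsto_pdf_atTop m v).const_mul (-(v : ℝ))).mul h1
    rw [show (0 : ℝ) = -(v : ℝ) * 0 * 0 by ring]
    exact h2.congr (fun y => by rw [div_eq_mul_inv])
  have hnn : ∀ x ∈ Ioi a, 0 ≤ p x + (v : ℝ) * p x / (x - m) ^ 2 := by
    intro x hx
    have hp0 := gaussianPDFReal_nonneg m v x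
    have : (0:ℝ) ≤ (v : ℝ) * p x / (x - m) ^ 2 := by positivity
    linarith
  have hint : IntegrableOn (fun x => p x + (v : ℝ) * p x / (x - m) ^ 2) (Ioi a) :=
    integrableOn_Ioi_deriv_of_nonneg' hderiv hnn htend
  have hval : ∫ x in Ioi a, (p x + (v : ℝ) * p x / (x - m) ^ 2) =
      (v : ℝ) * p a / (a - m) := by
    rw [integral_Ioi_of_hasDerivAt_of_tendsto' hderiv hint htend]
    ring
  have hpint : IntegrableOn p (Ioi a) := (integrable_gaussianPDFReal m v).integrableOn
  have hint2 : IntegrableOn (fun x => (v : ℝ) * p x / (x - m) ^ 2) (Ioi a) := by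
    have heq : ((fun x => p x + (v : ℝ) * p x / (x - m) ^ 2) - fun x => p x)
        = (fun x => (v : ℝ) * p x / (x - m) ^ 2) := by
      funext x; simp
    exact heq ▸ (hint.sub hpint)
  have hsplit : (v : ℝ) * p a / (a - m) = D + ∫ x in Ioi a, (v : ℝ) * p x / (x - m) ^ 2 := by
    rw [← hval, integral_add hpint hint2]
  have hmono : ∫ x in Ioi a, (v : ℝ) * p x / (x - m) ^ 2 ≤ (v : ℝ) / (a - m) ^ 2 * D := by
    rw [hD, ← integral_const_mul]
    apply setIntegral_mono_on hint2 (hpint.const_mul _) measurableSet_Ioi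
    intro x hx
    have hx' : a - m ≤ x - m := by have := hx.out; linarith
    have hp0 := gaussianPDFReal_nonneg m v x
    calc (v : ℝ) * p x / (x - m) ^ 2 ≤ (v : ℝ) * p x / (a - m) ^ 2 := by
          apply div_le_div_of_nonneg_left (mul_nonneg (NNReal.coe_nonneg v) hp0)
            (by positivity) (by nlinarith)
      _ = (v : ℝ) / (a - m) ^ 2 * p x := by ring
  have h6 : (v : ℝ) * p a / (a - m) ≤ (1 + (v : ℝ) / (a - m) ^ 2) * D := by
    rw [hsplit]; nlinarith
  rw [div_le_iff₀ ham] at h6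
  calc (v : ℝ) * p a ≤ (1 + (v : ℝ) / (a - m) ^ 2) * D * (a - m) := h6
    _ = ((a - m) + (v : ℝ) / (a - m)) * D := by field_simp


lemma setIntegral_gaussianReal (hv : v ≠ 0) (f : ℝ → ℝ) {s : Set ℝ} (hs : MeasurableSet s) :
    ∫ y in s, f y ∂(gaussianReal m v) = ∫ y in s, gaussianPDFReal m v y * f y := by
  rw [gaussianReal_of_var_ne_zero _ hv, gaussianPDF_def, restrict_withDensity hs]
  have hmeq : (fun x => ENNReal.ofReal (gaussianPDFReal m v x)) =
      (fun x => ((Real.toNNReal (gaussianPDFReal m v x) : ℝ≥0) : ℝ≥0∞)) := rfl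
  rw [hmeq, integral_withDensity_eq_integral_smul ((measurable_gaussianPDFReal m v).real_toNNReal) f]
  apply setIntegral_congr_fun hs
  intro y _
  simp [NNReal.smul_def, Real.coe_toNNReal _ (gaussianPDFReal_nonneg m v y)]

lemma gaussianReal_Ioi_toReal (hv : v ≠ 0) (a : ℝ) :
    ((gaussianReal m v) (Ioi a)).toReal = ∫ y in Ioi a, gaussianPDFReal m v y := by
  rw [gaussianReal_apply_eq_integral _ hv,
    ENNReal.toReal_ofReal (le_of_lt (tail_pos hv a))]

lemma tail_lower_zero (hv : 0 < (v : ℝ)) {a : ℝ} (ha : 2 * max a 0 + 1 ≤ Real.sqrt v) :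
    (Real.sqrt (2 * π))⁻¹ * Real.exp (-(1 : ℝ)/2) / 2 ≤
      ∫ y in Ioi a, gaussianPDFReal 0 v y := by
  set s := Real.sqrt (v : ℝ) with hs
  set b := max a 0 with hb
  have hb0 : 0 ≤ b := le_max_right a 0
  have hbs : b < s := by linarith
  have h1 : ∫ y in Ioc b s, gaussianPDFReal 0 v y ≤ ∫ y in Ioi a, gaussianPDFReal 0 v y := by
    apply setIntegral_mono_set ((integrable_gaussianPDFReal 0 v).integrableOn)
      (ae_of_all _ (gaussianPDFReal_nonneg 0 v))
    apply HasSubset.Subset.eventuallyLE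
    intro y hy
    exact lt_of_le_of_lt (le_max_left a 0) hy.1
  have h2 : ∫ y in Ioc b s, ((Real.sqrt (2 * π * v))⁻¹ * Real.exp (-(1:ℝ)/2)) ≤
      ∫ y in Ioc b s, gaussianPDFReal 0 v y := by
    apply setIntegral_mono_on (integrableOn_const measure_Ioc_lt_top.ne)
      ((integrable_gaussianPDFReal 0 v).integrableOn) measurableSet_Ioc
    intro y hy
    unfold gaussianPDFReal
    apply mul_le_mul_of_nonneg_left _ (by positivity)
    apply Real.exp_le_exp.mpr
    have hy2 : y ^ 2 ≤ (v : ℝ) := by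
      have h3 : y ^ 2 ≤ s ^ 2 := by
        apply pow_le_pow_left₀ (le_trans hb0 hy.1.le) hy.2
      rwa [hs, Real.sq_sqrt hv.le] at h3
    rw [neg_div, neg_div, neg_le_neg_iff, div_le_div_iff₀ (by positivity) (by norm_num)]
    nlinarith
  have h3 : ∫ y in Ioc b s, ((Real.sqrt (2 * π * v))⁻¹ * Real.exp (-(1:ℝ)/2)) =
      (s - b) * ((Real.sqrt (2 * π * v))⁻¹ * Real.exp (-(1:ℝ)/2)) := by
    rw [setIntegral_const, Real.volume_real_Ioc_of_le (by linarith), smul_eq_mul]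
  have h4 : (Real.sqrt (2 * π))⁻¹ * Real.exp (-(1:ℝ)/2) / 2 ≤
      (s - b) * ((Real.sqrt (2 * π * v))⁻¹ * Real.exp (-(1:ℝ)/2)) := by
    have hsplit : Real.sqrt (2 * π * v) = Real.sqrt (2 * π) * s := by
      rw [hs, ← Real.sqrt_mul (by positivity)]
    have hs0 : 0 < s := by linarith
    have hsb : s / 2 ≤ s - b := by linarith
    have h5 : (s / 2) * ((Real.sqrt (2 * π * v))⁻¹ * Real.exp (-(1:ℝ)/2)) ≤
        (s - b) * ((Real.sqrt (2 * π * v))⁻¹ * Real.exp (-(1:ℝ)/2)) := by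
      apply mul_le_mul_of_nonneg_right hsb (by positivity)
    refine le_trans (le_of_eq ?_) h5
    rw [hsplit]
    have h2π : (0:ℝ) < Real.sqrt (2 * π) := Real.sqrt_pos.mpr (by positivity)
    field_simp
  linarith

lemma tendsto_sqrt_atTop : Tendsto Real.sqrt atTop atTop := by
  apply tendsto_atTop_atTop_of_monotone (fun a b h => Real.sqrt_le_sqrt h)
  intro b
  exact ⟨b ^ 2, by rw [Real.sqrt_sq_eq_abs]; exact le_abs_self b⟩


end CondDriftAux

open CondDriftAux

lemma condExpDriftGt_eq (ν σ C : ℝ) (hσ : 0 < σ) {T : ℝ} (hT : 0 < T) :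
    condExpDriftGt ν σ C T = ν + σ ^ 2 * gaussianPDFReal (ν * T) (Real.toNNReal (σ ^ 2 * T)) C /
      ∫ y in Ioi C, gaussianPDFReal (ν * T) (Real.toNNReal (σ ^ 2 * T)) y := by
  set v := Real.toNNReal (σ ^ 2 * T) with hv
  set m := ν * T with hm
  have hvc : (v : ℝ) = σ ^ 2 * T := Real.coe_toNNReal _ (by positivity)
  have hv0 : 0 < (v : ℝ) := by rw [hvc]; positivity
  have hvne : v ≠ 0 := by
    intro h; rw [h] at hv0; simp at hv0
  set p := gaussianPDFReal m v with hp
  set D := ∫ y in Ioi C, p y with hD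
  have hDpos : 0 < D := tail_pos hvne C
  have hTne : T ≠ 0 := hT.ne'
  have hDne : D ≠ 0 := hDpos.ne'
  unfold condExpDriftGt
  rw [← hv, ← hm, setIntegral_gaussianReal hvne _ measurableSet_Ioi,
    gaussianReal_Ioi_toReal hvne, ← hp, ← hD]
  have hInt : ∀ y : ℝ, p y * (y / T) = (1 / T) * ((y - m) * p y) + ν * p y := by
    intro y
    rw [hp, hm]; field_simp; ring
  rw [setIntegral_congr_fun measurableSet_Ioi (fun y _ => hInt y), integral_add
    ((integrableOn_sub_mul_pdf hv0 C).const_mul _)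
    (((integrable_gaussianPDFReal m v).integrableOn).const_mul _),
    integral_const_mul, integral_const_mul, integral_sub_mul_pdf hv0 C, ← hp, ← hD, hvc]
  field_simp
  ring

/-- Proposition 2 (case `ν ≤ 0`, upper-tail conditioning):
`E[ν̂ | R̃_T > C] → 0` as `T → +∞`. -/
theorem tendsto_condExpDriftGt_of_nonpos (ν σ C : ℝ) (hν : ν ≤ 0) (hσ : 0 < σ) :
    Filter.Tendsto (fun T : ℝ => condExpDriftGt ν σ C T) Filter.atTop (nhds 0) := by
  rcases lt_or_eq_of_le hν with hlt | heq
  · -- case ν < 0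
    have hcT : Tendsto (fun T : ℝ => C - ν * T) atTop atTop := by
      have h1 : Tendsto (fun T : ℝ => (-ν) * T) atTop atTop :=
        Tendsto.const_mul_atTop (by linarith) tendsto_id
      exact (tendsto_atTop_add_const_left atTop C h1).congr (fun T => by ring)
    have hg : Tendsto (fun T : ℝ => C / T) atTop (nhds 0) := by
      have := tendsto_inv_atTop_zero.const_mul C
      simpa [div_eq_mul_inv] using this
    have hh : Tendsto (fun T : ℝ => C / T + σ ^ 2 / (C - ν * T)) atTop (nhds 0) := by
      have h3 : Tendsto (fun T : ℝ => σ ^ 2 / (C - ν * T)) atTop (nhds 0) := by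
        have := (tendsto_inv_atTop_zero.comp hcT).const_mul (σ ^ 2)
        simpa [div_eq_mul_inv, Function.comp] using this
      simpa using hg.add h3
    apply tendsto_of_tendsto_of_tendsto_of_le_of_le' hg hh
    · filter_upwards [eventually_gt_atTop 0, hcT.eventually_gt_atTop 0] with T hT hCm
      rw [condExpDriftGt_eq ν σ C hσ hT]
      set v := Real.toNNReal (σ ^ 2 * T) with hv
      have hvc : (v : ℝ) = σ ^ 2 * T := Real.coe_toNNReal _ (by positivity)
      have hv0 : 0 < (v : ℝ) := by rw [hvc]; positivity
      have hvne : v ≠ 0 := by intro h; rw [h] at hv0; simp at hv0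
      set pC := gaussianPDFReal (ν * T) v C with hpC
      set D := ∫ y in Ioi C, gaussianPDFReal (ν * T) v y with hD
      have hDpos : 0 < D := tail_pos hvne C
      have hm : ν * T < C := by linarith
      have h1 : (C - ν * T) * D ≤ (v : ℝ) * pC := tail_le hv0 hm
      have hsplit : (C - ν * T) / T = C / T - ν := by field_simp
      have h2 : (C - ν * T) / T ≤ σ ^ 2 * pC / D := by
        rw [div_le_div_iff₀ hT hDpos]
        calc (C - ν * T) * D ≤ (v : ℝ) * pC := h1
          _ = σ ^ 2 * pC * T := by rw [hvc]; ring
      linarith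
    · filter_upwards [eventually_gt_atTop 0, hcT.eventually_gt_atTop 0] with T hT hCm
      rw [condExpDriftGt_eq ν σ C hσ hT]
      set v := Real.toNNReal (σ ^ 2 * T) with hv
      have hvc : (v : ℝ) = σ ^ 2 * T := Real.coe_toNNReal _ (by positivity)
      have hv0 : 0 < (v : ℝ) := by rw [hvc]; positivity
      have hvne : v ≠ 0 := by intro h; rw [h] at hv0; simp at hv0
      set pC := gaussianPDFReal (ν * T) v C with hpC
      set D := ∫ y in Ioi C, gaussianPDFReal (ν * T) v y with hD
      have hDpos : 0 < D := tail_pos hvne C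
      have hm : ν * T < C := by linarith
      have hTne : T ≠ 0 := hT.ne'
      have hCmne : C - ν * T ≠ 0 := hCm.ne'
      have h1 : (v : ℝ) * pC ≤ ((C - ν * T) + (v : ℝ) / (C - ν * T)) * D := le_tail hv0 hm
      have key : σ ^ 2 * pC / D ≤ (C - ν * T) / T + σ ^ 2 / (C - ν * T) := by
        rw [div_le_iff₀ hDpos]
        have h3 : ((C - ν * T) / T + σ ^ 2 / (C - ν * T)) * D =
            (σ ^ 2 / (v : ℝ)) * (((C - ν * T) + (v : ℝ) / (C - ν * T)) * D) := by
          rw [hvc]; field_simp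
        rw [h3]
        calc σ ^ 2 * pC = (σ ^ 2 / (v : ℝ)) * ((v : ℝ) * pC) := by field_simp
          _ ≤ _ := mul_le_mul_of_nonneg_left h1 (by positivity)
      have hsplit : (C - ν * T) / T = C / T - ν := by field_simp
      linarith
  · -- case ν = 0
    subst heq
    have hs2 : Tendsto (fun T : ℝ => Real.sqrt (σ ^ 2 * T)) atTop atTop := by
      apply CondDriftAux.tendsto_sqrt_atTop.comp
      exact Tendsto.const_mul_atTop (by positivity) tendsto_id
    have hs : Tendsto (fun T : ℝ => Real.sqrt (2 * π * (σ ^ 2 * T))) atTop atTop := by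
      apply CondDriftAux.tendsto_sqrt_atTop.comp
      have h1 : Tendsto (fun T : ℝ => (2 * π * σ ^ 2) * T) atTop atTop :=
        Tendsto.const_mul_atTop (by positivity) tendsto_id
      exact h1.congr (fun T => by ring)
    set c₀ : ℝ := (Real.sqrt (2 * π))⁻¹ * Real.exp (-(1 : ℝ)/2) / 2 with hc₀
    have hc₀pos : 0 < c₀ := by
      rw [hc₀]
      have h2π : (0 : ℝ) < Real.sqrt (2 * π) := Real.sqrt_pos.mpr (by positivity)
      positivity
    have hh : Tendsto (fun T : ℝ => σ ^ 2 * (Real.sqrt (2 * π * (σ ^ 2 * T)))⁻¹ / c₀)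
        atTop (nhds 0) := by
      have := ((tendsto_inv_atTop_zero.comp hs).const_mul (σ ^ 2)).div_const c₀
      simpa [Function.comp] using this
    apply tendsto_of_tendsto_of_tendsto_of_le_of_le' tendsto_const_nhds hh
    · filter_upwards [eventually_gt_atTop 0] with T hT
      rw [condExpDriftGt_eq 0 σ C hσ hT]
      simp only [zero_mul, zero_add]
      set v := Real.toNNReal (σ ^ 2 * T) with hv
      have hvc : (v : ℝ) = σ ^ 2 * T := Real.coe_toNNReal _ (by positivity)
      have hv0 : 0 < (v : ℝ) := by rw [hvc]; positivity
      have hvne : v ≠ 0 := by intro h; rw [h] at hv0; simp at hv0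
      have hDpos : 0 < ∫ y in Ioi C, gaussianPDFReal 0 v y := tail_pos hvne C
      have hpC : 0 ≤ gaussianPDFReal 0 v C := gaussianPDFReal_nonneg 0 v C
      exact div_nonneg (mul_nonneg (sq_nonneg σ) hpC) hDpos.le
    · filter_upwards [eventually_gt_atTop 0,
        hs2.eventually_ge_atTop (2 * max C 0 + 1)] with T hT hb
      rw [condExpDriftGt_eq 0 σ C hσ hT]
      simp only [zero_mul, zero_add]
      set v := Real.toNNReal (σ ^ 2 * T) with hv
      have hvc : (v : ℝ) = σ ^ 2 * T := Real.coe_toNNReal _ (by positivity)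
      have hv0 : 0 < (v : ℝ) := by rw [hvc]; positivity
      have hvne : v ≠ 0 := by intro h; rw [h] at hv0; simp at hv0
      set pC := gaussianPDFReal 0 v C with hpCdef
      set D := ∫ y in Ioi C, gaussianPDFReal 0 v y with hD
      have hDlow : c₀ ≤ D := by
        rw [hc₀]
        apply tail_lower_zero hv0
        rw [hvc]
        exact hb
      have hpCle : pC ≤ (Real.sqrt (2 * π * (v : ℝ)))⁻¹ := by
        rw [hpCdef]
        unfold gaussianPDFReal
        calc (Real.sqrt (2 * π * (v : ℝ)))⁻¹ * rexp (-(C - 0) ^ 2 / (2 * (v : ℝ)))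
            ≤ (Real.sqrt (2 * π * (v : ℝ)))⁻¹ * 1 := by
              apply mul_le_mul_of_nonneg_left _ (by positivity)
              rw [Real.exp_le_one_iff]
              apply div_nonpos_of_nonpos_of_nonneg (by nlinarith [sq_nonneg (C - 0)]) (by positivity)
          _ = (Real.sqrt (2 * π * (v : ℝ)))⁻¹ := mul_one _
      have hpC0 : 0 ≤ pC := gaussianPDFReal_nonneg 0 v C
      have hfinal : σ ^ 2 * pC / D ≤ σ ^ 2 * (Real.sqrt (2 * π * (v : ℝ)))⁻¹ / c₀ :=
        div_le_div₀ (by positivity) (mul_le_mul_of_nonneg_left hpCle (by positivity))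
          hc₀pos hDlow
      rw [hvc] at hfinal
      exact hfinal
end

section
/- Let ν < 0, σ > 0 and C ∈ ℝ. Then E[ν̂ | R̃_T ≤ C], viewed as a function of T > 0, tends to ν as T → +∞. -/
open MeasureTheory ProbabilityTheory Set

lemma integrable_id_gaussian01 : Integrable (fun x : ℝ => x) (gaussianReal 0 1) := by
  rw [gaussianReal_of_var_ne_zero _ one_ne_zero,
    integrable_withDensity_iff (measurable_gaussianPDF _ _)
      (Filter.Eventually.of_forall fun x => ENNReal.ofReal_lt_top)]
  have h := (integrable_mul_exp_neg_mul_sq (by norm_num : (0:ℝ) < 2⁻¹)).const_mul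
    ((Real.sqrt (2 * Real.pi))⁻¹)
  refine h.congr (Filter.Eventually.of_forall fun x => ?_)
  simp only; rw [show gaussianPDF 0 1 x = ENNReal.ofReal (gaussianPDFReal 0 1 x) from rfl,
    ENNReal.toReal_ofReal (gaussianPDFReal_nonneg _ _ _), gaussianPDFReal]
  push_cast
  ring_nf

lemma sqrt_tendsto_atTop' : Filter.Tendsto Real.sqrt Filter.atTop Filter.atTop := by
  refine Filter.tendsto_atTop_atTop.mpr fun b => ⟨b ^ 2, fun x hx => ?_⟩
  calc b ≤ |b| := le_abs_self b
  _ = Real.sqrt (b ^ 2) := (Real.sqrt_sq_eq_abs b).symm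
  _ ≤ Real.sqrt x := Real.sqrt_le_sqrt hx

/-- `E[ν̂ | R̃_T ≤ C]` as a function of the horizon `T`, where the return
`R̃_T ∼ N(νT, σ²T)` and `ν̂ = R̃_T / T`. -/
noncomputable def condExpDriftLe (ν σ C T : ℝ) : ℝ :=
  (∫ y in Iic C, y / T ∂(gaussianReal (ν * T) (Real.toNNReal (σ ^ 2 * T)))) /
    ((gaussianReal (ν * T) (Real.toNNReal (σ ^ 2 * T))) (Iic C)).toReal

/-- Proposition 2 (case `ν < 0`, lower-tail conditioning):
`E[ν̂ | R̃_T ≤ C] → ν` as `T → +∞`. -/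
theorem tendsto_condExpDriftLe_of_neg (ν σ C : ℝ) (hν : ν < 0) (hσ : 0 < σ) :
    Filter.Tendsto (fun T : ℝ => condExpDriftLe ν σ C T) Filter.atTop (nhds ν) := by
  open Filter Real in
  set γ₀ := gaussianReal 0 1 with hγ₀
  set a : ℝ → ℝ := fun T => (C - ν * T) / (σ * Real.sqrt T) with ha_def
  set I : ℝ → ℝ := fun t => ∫ x in Iic t, x ∂γ₀ with hI_def
  set P : ℝ → ℝ := fun t => (γ₀ (Iic t)).toReal with hP_def
  have hInt : Integrable (fun x : ℝ => x) γ₀ := integrable_id_gaussian01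
  -- `a` tends to infinity
  have hA : Tendsto a atTop atTop := by
    have h1 : Tendsto (fun T : ℝ => C / (σ * Real.sqrt T) + (-ν / σ) * Real.sqrt T)
        atTop atTop := by
      refine Filter.Tendsto.add_atTop
        (tendsto_const_nhds.div_atTop (Tendsto.const_mul_atTop hσ sqrt_tendsto_atTop'))
        (Tendsto.const_mul_atTop (div_pos (neg_pos.mpr hν) hσ) sqrt_tendsto_atTop')
    refine h1.congr' ?_
    filter_upwards [eventually_gt_atTop (0:ℝ)] with T hT
    have hs : Real.sqrt T ≠ 0 := (Real.sqrt_pos.mpr hT).ne'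
    have hsq : Real.sqrt T * Real.sqrt T = T := Real.mul_self_sqrt hT.le
    rw [ha_def]
    simp only
    rw [sub_div]
    congr 1
    field_simp
    linear_combination (-ν) * hsq
  -- `P ∘ a → 1`
  have hP1 : Tendsto (fun T => P (a T)) atTop (nhds 1) := by
    have h := (tendsto_measure_Iic_atTop γ₀).comp hA
    have h2 := (ENNReal.tendsto_toReal (by simp : γ₀ univ ≠ ⊤)).comp h
    rw [measure_univ, ENNReal.toReal_one] at h2
    exact h2
  -- bound on I
  set M : ℝ := ∫ x, |x| ∂γ₀ with hM_def
  have hIbd : ∀ t, |I t| ≤ M := by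
    intro t
    calc |I t| ≤ ∫ x in Iic t, |x| ∂γ₀ := by
          simpa [Real.norm_eq_abs] using
            norm_integral_le_integral_norm (μ := γ₀.restrict (Iic t)) (fun x : ℝ => x)
    _ ≤ M := setIntegral_le_integral hInt.abs
          (Filter.Eventually.of_forall fun x => abs_nonneg x)
  have hterm : Tendsto (fun T => σ / Real.sqrt T * I (a T)) atTop (nhds 0) := by
    have hg : Tendsto (fun T : ℝ => σ / Real.sqrt T * M) atTop (nhds 0) := by
      simpa using (tendsto_const_nhds.div_atTop sqrt_tendsto_atTop').mul_const M
    refine squeeze_zero_norm (fun T => ?_) hg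
    have h0 : (0:ℝ) ≤ σ / Real.sqrt T := div_nonneg hσ.le (Real.sqrt_nonneg T)
    rw [Real.norm_eq_abs, abs_mul, abs_of_nonneg h0]
    exact mul_le_mul_of_nonneg_left (hIbd _) h0
  have hnum : Tendsto (fun T => σ / Real.sqrt T * I (a T) + ν * P (a T)) atTop (nhds ν) := by
    simpa using hterm.add (hP1.const_mul ν)
  have hmain : Tendsto (fun T => (σ / Real.sqrt T * I (a T) + ν * P (a T)) / P (a T))
      atTop (nhds ν) := by
    simpa [Pi.div_def] using hnum.div hP1 one_ne_zero
  refine hmain.congr' ?_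
  filter_upwards [eventually_gt_atTop (0:ℝ)] with T hT
  have hs : (0:ℝ) < Real.sqrt T := Real.sqrt_pos.mpr hT
  have hsq : Real.sqrt T * Real.sqrt T = T := Real.mul_self_sqrt hT.le
  set c : ℝ := σ * Real.sqrt T with hc_def
  have hc : 0 < c := mul_pos hσ hs
  -- the gaussian as a pushforward of the standard gaussian by `x ↦ c x + ν T`
  have hmap : gaussianReal (ν * T) (Real.toNNReal (σ ^ 2 * T))
      = Measure.map (fun x => c * x + ν * T) γ₀ := by
    have hvar : (NNReal.mk (c ^ 2) (sq_nonneg c) * 1 : NNReal) = Real.toNNReal (σ ^ 2 * T) := by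
      apply NNReal.coe_injective
      rw [NNReal.coe_mul, NNReal.coe_one, mul_one, Real.coe_toNNReal _ (by positivity)]
      simp only [NNReal.coe_mk, hc_def]
      linear_combination σ ^ 2 * hsq
    have h1 : (γ₀.map (c * ·)).map (· + ν * T)
        = gaussianReal (ν * T) (Real.toNNReal (σ ^ 2 * T)) := by
      rw [hγ₀, gaussianReal_map_const_mul, gaussianReal_map_add_const, mul_zero, zero_add, hvar]
    rw [← h1, Measure.map_map (measurable_add_const _) (measurable_const_mul c)]
    rfl
  have hemb : MeasurableEmbedding (fun x : ℝ => c * x + ν * T) := by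
    have := ((Homeomorph.mulLeft₀ c hc.ne').trans
      (Homeomorph.addRight (ν * T))).measurableEmbedding
    exact this
  have hpre : (fun x : ℝ => c * x + ν * T) ⁻¹' (Iic C) = Iic (a T) := by
    ext x
    simp only [mem_preimage, mem_Iic, ha_def]
    rw [le_div_iff₀ hc]
    constructor <;> intro h <;> nlinarith [mul_comm x c]
  have hptw : ∀ x : ℝ, (c * x + ν * T) / T = σ / Real.sqrt T * x + ν := by
    intro x
    rw [hc_def]
    field_simp
    linear_combination (σ * x) * hsq
  have hIntOn : IntegrableOn (fun x : ℝ => σ / Real.sqrt T * x) (Iic (a T)) γ₀ :=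
    (hInt.const_mul _).integrableOn
  have hIntC : IntegrableOn (fun _ : ℝ => ν) (Iic (a T)) γ₀ :=
    (integrable_const ν).integrableOn
  rw [condExpDriftLe, hmap, hemb.setIntegral_map, Measure.map_apply hemb.measurable
    measurableSet_Iic, hpre]
  congr 1
  refine Eq.symm ?_
  calc (∫ x in Iic (a T), (c * x + ν * T) / T ∂γ₀)
      = ∫ x in Iic (a T), (σ / Real.sqrt T * x + ν) ∂γ₀ :=
        integral_congr_ae (Filter.Eventually.of_forall fun x => hptw x)
    _ = (∫ x in Iic (a T), σ / Real.sqrt T * x ∂γ₀) + ∫ _ in Iic (a T), ν ∂γ₀ :=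
        integral_add hIntOn hIntC
    _ = σ / Real.sqrt T * I (a T) + ν * P (a T) := by
        rw [integral_const_mul, setIntegral_const, smul_eq_mul, measureReal_def]; ring
end

section
/- Let ν ≥ 0, σ > 0 and C ∈ ℝ. Then E[ν̂ | R̃_T ≤ C], viewed as a function of T > 0, tends to 0 as T → +∞. -/
open MeasureTheory ProbabilityTheory Set

namespace CondExpDriftAux

open Filter

/-- The Gaussian density as a function of real mean and variance. -/
noncomputable def gd (m v y : ℝ) : ℝ :=
  (Real.sqrt (2 * Real.pi * v))⁻¹ * Real.exp (-(y - m)^2 / (2 * v))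

lemma gd_eq (m : ℝ) (V : NNReal) : gaussianPDFReal m V = gd m (V : ℝ) := rfl

lemma gd_pos {v : ℝ} (hv : 0 < v) (m y : ℝ) : 0 < gd m v y := by
  unfold gd; positivity

lemma gd_rw {m v : ℝ} (hv : 0 < v) :
    gd m v = fun y => (Real.sqrt (2 * Real.pi * v))⁻¹ *
      ((fun x => Real.exp (-((2*v)⁻¹) * x^2)) (y - m)) := by
  funext y
  simp only [gd]
  congr 1
  apply congrArg Real.exp
  field_simp

lemma integrable_gd {v : ℝ} (hv : 0 < v) (m : ℝ) : Integrable (gd m v) := by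
  rw [gd_rw hv]
  exact ((integrable_exp_neg_mul_sq (by positivity)).comp_sub_right m).const_mul _

lemma continuous_gd (m v : ℝ) : Continuous (gd m v) := by
  unfold gd; fun_prop

lemma integrable_sub_mul_gd {v : ℝ} (hv : 0 < v) (m : ℝ) :
    Integrable (fun y => (y - m) * gd m v y) := by
  have h := (((integrable_mul_exp_neg_mul_sq (b := (2*v)⁻¹) (by positivity)).comp_sub_right
    m).const_mul ((Real.sqrt (2 * Real.pi * v))⁻¹))
  refine h.congr (Filter.Eventually.of_forall fun y => ?_)
  simp only [gd]
  rw [show -(y-m)^2/(2*v) = -((2*v)⁻¹) * (y-m)^2 by field_simp]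
  ring

lemma hasDerivAt_exp_part {m v : ℝ} (hv : 0 < v) (y : ℝ) :
    HasDerivAt (fun y => Real.exp (-(y - m)^2 / (2*v)))
      ((-(y-m)/v) * Real.exp (-(y - m)^2 / (2*v))) y := by
  have h1 : HasDerivAt (fun y : ℝ => -(y - m)^2 / (2*v)) (-(2*(y-m))/(2*v)) y := by
    have := (((hasDerivAt_id y).sub_const m).pow 2).neg.div_const (2*v)
    simpa using this
  have := h1.exp
  convert this using 1
  field_simp

lemma hasDerivAt_gd {m v : ℝ} (hv : 0 < v) (y : ℝ) :
    HasDerivAt (gd m v) ((-(y-m)/v) * gd m v y) y := by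
  have := (hasDerivAt_exp_part (m := m) hv y).const_mul (Real.sqrt (2 * Real.pi * v))⁻¹
  refine (this : HasDerivAt (gd m v) _ y).congr_deriv ?_
  simp only [gd]; ring

lemma hasDerivAt_neg_v_gd {m v : ℝ} (hv : 0 < v) (y : ℝ) :
    HasDerivAt (fun y => -v * gd m v y) ((y - m) * gd m v y) y := by
  have := (hasDerivAt_gd (m := m) hv y).const_mul (-v)
  refine this.congr_deriv ?_
  field_simp

lemma tendsto_gd_atBot {m v : ℝ} (hv : 0 < v) :
    Tendsto (fun y => gd m v y) atBot (nhds 0) := by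
  have h1 : Tendsto (fun y : ℝ => -(y - m)^2 / (2*v)) atBot atBot := by
    apply Tendsto.atBot_div_const (by positivity)
    apply tendsto_neg_atTop_atBot.comp
    have habs : Tendsto (fun y : ℝ => |y - m|) atBot atTop :=
      tendsto_abs_atBot_atTop.comp (tendsto_atBot_add_const_right _ (-m) tendsto_id)
    have := (tendsto_pow_atTop (n := 2) (by norm_num)).comp habs
    refine this.congr fun y => ?_
    simp [sq_abs]
  have := Real.tendsto_exp_atBot.comp h1
  have h2 := this.const_mul (Real.sqrt (2 * Real.pi * v))⁻¹
  simpa [gd, Function.comp] using h2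

/-- The lower-tail mass function. -/
noncomputable def Gl (m v C : ℝ) : ℝ := ∫ y in Iic C, gd m v y

lemma integral_Iic_sub_mul_gd {m v : ℝ} (hv : 0 < v) (C : ℝ) :
    ∫ y in Iic C, (y - m) * gd m v y = -v * gd m v C := by
  have h := integral_Iic_of_hasDerivAt_of_tendsto' (f := fun y => -v * gd m v y)
    (f' := fun y => (y - m) * gd m v y) (a := C) (m := 0)
    (fun x _ => hasDerivAt_neg_v_gd hv x) (integrable_sub_mul_gd hv m).integrableOn ?_
  · rw [h]; ring
  · have := (tendsto_gd_atBot (m := m) hv).const_mul (-v)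
    simpa using this

lemma Gl_pos {v : ℝ} (hv : 0 < v) (m C : ℝ) : 0 < Gl m v C := by
  rw [Gl, setIntegral_pos_iff_support_of_nonneg_ae
    (Filter.Eventually.of_forall fun y => (gd_pos hv m y).le)
    (integrable_gd hv m).integrableOn]
  have hs : Function.support (gd m v) = univ :=
    eq_univ_of_forall fun y => (gd_pos hv m y).ne'
  rw [hs, univ_inter, Real.volume_Iic]
  simp

lemma Gl_le {m v C : ℝ} (hv : 0 < v) (hC : C < m) :
    (m - C) * Gl m v C ≤ v * gd m v C := by
  have hint : IntegrableOn (fun y => (m - C)⁻¹ * ((m - y) * gd m v y)) (Iic C) := by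
    have : Integrable (fun y => (m - y) * gd m v y) := by
      have := (integrable_sub_mul_gd hv m).neg
      refine this.congr (Filter.Eventually.of_forall fun y => ?_); simp; ring
    exact (this.const_mul _).integrableOn
  have h1 : Gl m v C ≤ ∫ y in Iic C, (m - C)⁻¹ * ((m - y) * gd m v y) := by
    refine setIntegral_mono_on (integrable_gd hv m).integrableOn hint measurableSet_Iic
      fun y hy => ?_
    rw [← mul_assoc]
    refine le_mul_of_one_le_left (gd_pos hv m y).le ?_
    rw [← div_eq_inv_mul]
    rw [le_div_iff₀ (by linarith)]
    simp only [mem_Iic] at hy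
    linarith
  have h2 : ∫ y in Iic C, (m - C)⁻¹ * ((m - y) * gd m v y)
      = (m - C)⁻¹ * (v * gd m v C) := by
    rw [integral_const_mul]
    congr 1
    have : ∀ y : ℝ, (m - y) * gd m v y = -((y - m) * gd m v y) := fun y => by ring
    simp_rw [this]
    rw [integral_neg, integral_Iic_sub_mul_gd hv C]
    ring
  rw [h2] at h1
  have hmC : 0 < m - C := by linarith
  calc (m - C) * Gl m v C ≤ (m - C) * ((m - C)⁻¹ * (v * gd m v C)) := by
        exact mul_le_mul_of_nonneg_left h1 hmC.le
    _ = v * gd m v C := by field_simp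

lemma tendsto_Gl_atBot {m v : ℝ} (hv : 0 < v) :
    Tendsto (fun b => Gl m v b) atBot (nhds 0) := by
  apply squeeze_zero' (Filter.Eventually.of_forall fun b => (Gl_pos hv m b).le)
    (g := fun b => v * gd m v b)
  · filter_upwards [eventually_le_atBot (m - 1)] with b hb
    have hC : b < m := by linarith
    have h1 := Gl_le hv hC
    have hmb : (1:ℝ) ≤ m - b := by linarith
    have hg := (gd_pos hv m b).le
    nlinarith [Gl_pos hv m b]
  · have := (tendsto_gd_atBot (m := m) hv).const_mul v
    simpa using this

/-- The auxiliary function used for the lower Mills-type bound. -/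
noncomputable def wf (m v y : ℝ) : ℝ := ((y - m) * v / ((y - m)^2 + v)) * gd m v y

lemma hasDerivAt_wf {m v : ℝ} (hv : 0 < v) (y : ℝ) :
    HasDerivAt (wf m v) (2*v^2/(((y-m)^2+v)^2) * gd m v y - gd m v y) y := by
  have hq : HasDerivAt (fun y : ℝ => (y - m) * v / ((y - m)^2 + v))
      ((1 * v * ((y - m)^2 + v) - (y - m) * v * (2 * (y - m)^1)) / ((y - m)^2 + v)^2) y := by
    have h1 : HasDerivAt (fun y : ℝ => (y - m) * v) (1 * v) y :=
      ((hasDerivAt_id y).sub_const m).mul_const v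
    have h2 : HasDerivAt (fun y : ℝ => (y - m)^2 + v) (2 * (y - m)^1) y := by
      have := (((hasDerivAt_id y).sub_const m).pow 2).add_const v
      simpa using this
    exact h1.div h2 (by positivity)
  have h := hq.mul (hasDerivAt_gd (m := m) hv y)
  refine h.congr_deriv ?_
  have hne : ((y:ℝ) - m)^2 + v ≠ 0 := by positivity
  field_simp
  ring

lemma Gl_ge {m v C : ℝ} (hv : 0 < v) (hC : C < m) :
    ((m - C) * v / ((m - C)^2 + v)) * gd m v C ≤ Gl m v C := by
  have hwcont : Continuous (fun y => 2*v^2/(((y-m)^2+v)^2) * gd m v y - gd m v y) := by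
    have h1 : Continuous (fun y : ℝ => 2*v^2/(((y-m)^2+v)^2)) := by
      apply Continuous.div (by fun_prop) (by fun_prop)
      intro y; positivity
    exact (h1.mul (continuous_gd m v)).sub (continuous_gd m v)
  have key : ∀ b, b ≤ C → Gl m v b + wf m v b ≤ Gl m v C + wf m v C := by
    intro b hb
    have hG : Gl m v C - Gl m v b = ∫ y in b..C, gd m v y :=
      intervalIntegral.integral_Iic_sub_Iic (integrable_gd hv m).integrableOn
        (integrable_gd hv m).integrableOn
    have hw : wf m v C - wf m v b
        = ∫ y in b..C, (2*v^2/(((y-m)^2+v)^2) * gd m v y - gd m v y) :=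
      (intervalIntegral.integral_eq_sub_of_hasDerivAt (fun x _ => hasDerivAt_wf hv x)
        (hwcont.intervalIntegrable b C)).symm
    have hsum : (Gl m v C - Gl m v b) + (wf m v C - wf m v b)
        = ∫ y in b..C, (2*v^2/(((y-m)^2+v)^2) * gd m v y) := by
      rw [hG, hw, ← intervalIntegral.integral_add ((continuous_gd m v).intervalIntegrable b C)
        (hwcont.intervalIntegrable b C)]
      congr 1; funext y; ring
    have hnn : 0 ≤ ∫ y in b..C, (2*v^2/(((y-m)^2+v)^2) * gd m v y) := by
      apply intervalIntegral.integral_nonneg hb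
      intro y _
      have := (gd_pos hv m y).le
      positivity
    linarith
  have hw0 : Tendsto (fun b => wf m v b) atBot (nhds 0) := by
    have hb1 : Tendsto (fun b => v * gd m v b) atBot (nhds 0) := by
      have := (tendsto_gd_atBot (m := m) hv).const_mul v; simpa using this
    have hb2 : Tendsto (fun b => -(v * gd m v b)) atBot (nhds 0) := by
      have := hb1.neg; simpa using this
    apply tendsto_of_tendsto_of_tendsto_of_le_of_le' hb2 hb1
    · filter_upwards [eventually_le_atBot (m - 1)] with b hb
      have hg := (gd_pos hv m b).le
      have h1 : (1:ℝ) ≤ m - b := by linarith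
      unfold wf
      have hq : -v ≤ (b - m) * v / ((b - m)^2 + v) := by
        rw [le_div_iff₀ (by positivity)]
        have huu : (0:ℝ) ≤ (b - m)^2 + (b - m) := by nlinarith
        nlinarith [mul_nonneg hv.le huu]
      nlinarith
    · filter_upwards [eventually_le_atBot (m - 1)] with b hb
      have hg := (gd_pos hv m b).le
      unfold wf
      have hq : (b - m) * v / ((b - m)^2 + v) ≤ 0 :=
        div_nonpos_of_nonpos_of_nonneg (by nlinarith) (by positivity)
      have hv2 : 0 ≤ v * gd m v b := mul_nonneg hv.le hg
      nlinarith
  have hH : Tendsto (fun b => Gl m v b + wf m v b) atBot (nhds 0) := by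
    have := (tendsto_Gl_atBot (m := m) hv).add hw0; simpa using this
  have h0 : (0:ℝ) ≤ Gl m v C + wf m v C :=
    le_of_tendsto hH ((eventually_le_atBot C).mono key)
  have hwC : wf m v C = -(((m - C) * v / ((m - C)^2 + v)) * gd m v C) := by
    unfold wf
    rw [show (C - m)^2 = (m - C)^2 by ring]
    ring
  linarith

lemma tendsto_sqrt_atTop : Tendsto Real.sqrt atTop atTop := by
  apply tendsto_atTop_atTop.mpr
  intro b
  refine ⟨b^2, fun a ha => ?_⟩
  rcases le_or_gt b 0 with hb | hb
  · exact hb.trans (Real.sqrt_nonneg a)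
  · rw [show b = Real.sqrt (b^2) by rw [Real.sqrt_sq hb.le]]
    exact Real.sqrt_le_sqrt ha

end CondExpDriftAux

open CondExpDriftAux Filter

namespace CondExpDriftAux

variable {ν σ C T : ℝ}

lemma V_ne_zero (hσ : 0 < σ) (hT : 0 < T) : Real.toNNReal (σ ^ 2 * T) ≠ 0 := by
  rw [ne_eq, Real.toNNReal_eq_zero]
  push_neg
  positivity

lemma V_coe (hσ : 0 < σ) (hT : 0 < T) : ((Real.toNNReal (σ ^ 2 * T)) : ℝ) = σ ^ 2 * T :=
  Real.coe_toNNReal _ (by positivity)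

lemma denom_eq (hσ : 0 < σ) (hT : 0 < T) (C : ℝ) :
    ((gaussianReal (ν * T) (Real.toNNReal (σ ^ 2 * T))) (Iic C)).toReal
      = Gl (ν * T) (σ ^ 2 * T) C := by
  rw [gaussianReal_apply_eq_integral _ (V_ne_zero hσ hT), ENNReal.toReal_ofReal
    (setIntegral_nonneg measurableSet_Iic fun y _ => gaussianPDFReal_nonneg _ _ y)]
  rw [Gl]
  congr 1
  rw [gd_eq, V_coe hσ hT]

lemma num_eq (hσ : 0 < σ) (hT : 0 < T) :
    (∫ y in Iic C, y / T ∂(gaussianReal (ν * T) (Real.toNNReal (σ ^ 2 * T))))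
      = (ν * T * Gl (ν * T) (σ ^ 2 * T) C - (σ ^ 2 * T) * gd (ν * T) (σ ^ 2 * T) C) / T := by
  set m := ν * T
  set v := σ ^ 2 * T with hvdef
  have hv : 0 < v := by positivity
  rw [integral_div]
  congr 1
  rw [gaussianReal_of_var_ne_zero _ (V_ne_zero hσ hT)]
  have hpdf : gaussianPDF m (Real.toNNReal v)
      = fun x => ((Real.toNNReal (gd m v x) : NNReal) : ENNReal) := by
    funext x
    rw [gaussianPDF, gd_eq, V_coe hσ hT, ENNReal.ofReal]
  rw [hpdf]
  have hV : ((Real.toNNReal v : NNReal) : ℝ) = v := Real.coe_toNNReal _ hv.le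
  have hmeas : Measurable (gd m v) := by
    rw [← hV, ← gd_eq]
    exact measurable_gaussianPDFReal _ _
  rw [setIntegral_withDensity_eq_setIntegral_smul
    (show Measurable fun x => Real.toNNReal (gd m v x) from
      measurable_real_toNNReal.comp hmeas) _ measurableSet_Iic]
  have hsm : ∀ y : ℝ, (Real.toNNReal (gd m v y)) • y = (y - m) * gd m v y + m * gd m v y := by
    intro y
    rw [NNReal.smul_def, Real.coe_toNNReal _ (gd_pos hv m y).le, smul_eq_mul]
    ring
  simp_rw [hsm]
  rw [integral_add ((integrable_sub_mul_gd hv m).integrableOn)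
    (((integrable_gd hv m).const_mul m).integrableOn)]
  rw [integral_Iic_sub_mul_gd hv C, integral_const_mul]
  rw [Gl]
  ring

lemma condExp_formula (hσ : 0 < σ) (hT : 0 < T) :
    condExpDriftLe ν σ C T
      = ν - σ ^ 2 * gd (ν * T) (σ ^ 2 * T) C / Gl (ν * T) (σ ^ 2 * T) C := by
  rw [condExpDriftLe, num_eq hσ hT, denom_eq hσ hT]
  have hv : (0:ℝ) < σ ^ 2 * T := by positivity
  have hG := (Gl_pos hv (ν * T) C).ne'
  field_simp
  rw [sub_div, mul_comm T (σ ^ 2), mul_div_cancel_right₀ _ hG]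

end CondExpDriftAux

/-- Proposition 2 (case `ν ≥ 0`, lower-tail conditioning):
`E[ν̂ | R̃_T ≤ C] → 0` as `T → +∞`. -/
theorem tendsto_condExpDriftLe_of_nonneg (ν σ C : ℝ) (hν : 0 ≤ ν) (hσ : 0 < σ) :
    Filter.Tendsto (fun T : ℝ => condExpDriftLe ν σ C T) Filter.atTop (nhds 0) := by
  rcases hν.eq_or_lt with hν0 | hν'
  · -- case ν = 0
    subst hν0
    set c₀ : ℝ := (Real.sqrt (2 * Real.pi))⁻¹ * Real.exp (-(C ^ 2 / σ ^ 2) - 1) with hc₀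
    have hc₀pos : 0 < c₀ := by positivity
    set K : ℝ := σ / (Real.sqrt (2 * Real.pi) * c₀) with hK
    have hKpos : 0 < K := by positivity
    apply tendsto_of_tendsto_of_tendsto_of_le_of_le' (g := fun T : ℝ => -(K / Real.sqrt T))
      (h := fun _ : ℝ => (0:ℝ))
    · have := (Filter.Tendsto.div_atTop (tendsto_const_nhds (x := K))
        tendsto_sqrt_atTop).neg
      simpa using this
    · exact tendsto_const_nhds
    · -- lower bound
      filter_upwards [eventually_ge_atTop (1:ℝ)] with T hT1
      have hT : (0:ℝ) < T := by linarith
      have hv : (0:ℝ) < σ ^ 2 * T := by positivity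
      rw [condExp_formula hσ hT]
      simp only [zero_mul]
      have hG := Gl_pos hv 0 C
      have hg := gd_pos hv 0 C
      -- lower bound on Gl
      have hGlb : c₀ ≤ Gl 0 (σ ^ 2 * T) C := by
        set s : ℝ := σ * Real.sqrt T with hs
        have hsT : 0 < Real.sqrt T := Real.sqrt_pos.mpr hT
        have hspos : 0 < s := by positivity
        have hs2 : s ^ 2 = σ ^ 2 * T := by
          rw [hs, mul_pow, Real.sq_sqrt hT.le]
        have h1 : ∫ y in Ioc (C - s) C, gd 0 (σ ^ 2 * T) y
            ≤ Gl 0 (σ ^ 2 * T) C := by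
          refine setIntegral_mono_set (integrable_gd hv _).integrableOn
            (Filter.Eventually.of_forall fun y => (gd_pos hv _ y).le) ?_
          exact HasSubset.Subset.eventuallyLE Ioc_subset_Iic_self
        have hconst : ∀ y ∈ Ioc (C - s) C,
            (Real.sqrt (2 * Real.pi * (σ ^ 2 * T)))⁻¹ * Real.exp (-(C ^ 2 / σ ^ 2) - 1)
              ≤ gd 0 (σ ^ 2 * T) y := by
          intro y hy
          obtain ⟨hy1, hy2⟩ := hy
          unfold gd
          refine mul_le_mul_of_nonneg_left ?_ (by positivity)
          rw [Real.exp_le_exp]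
          have habs : y ^ 2 ≤ (|C| + s) ^ 2 := by
            nlinarith [le_abs_self C, neg_abs_le C, abs_nonneg C, hspos.le]
          have hyb : y ^ 2 ≤ 2 * C ^ 2 + 2 * (σ ^ 2 * T) := by
            nlinarith [sq_nonneg (|C| - s), sq_abs C]
          have hyb2 : y ^ 2 ≤ 2 * T * C ^ 2 + 2 * (σ ^ 2 * T) := by
            nlinarith [sq_nonneg C]
          rw [show y - (0:ℝ) = y by ring]
          rw [neg_sub_left, neg_div, neg_le_neg_iff, div_le_iff₀ (by positivity)]
          have hexp : (C ^ 2 / σ ^ 2 + 1) * (2 * (σ ^ 2 * T)) = 2 * T * C ^ 2 + 2 * (σ ^ 2 * T) := by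
            field_simp
          linarith [hyb2, hexp]
        have h2 := setIntegral_ge_of_const_le (μ := volume) measurableSet_Ioc
          (by rw [Real.volume_Ioc]; exact ENNReal.ofReal_ne_top)
          hconst (integrable_gd hv _).integrableOn
        have hvol : ((volume (Ioc (C - s) C)).toReal) = s := by
          rw [Real.volume_Ioc, ENNReal.toReal_ofReal (by linarith)]
          ring
        rw [measureReal_def, hvol] at h2
        have hsqrt : Real.sqrt (2 * Real.pi * (σ ^ 2 * T)) = Real.sqrt (2 * Real.pi) * s := by
          rw [Real.sqrt_mul (by positivity), hs, ← hs2, Real.sqrt_sq hspos.le]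
        have hfinal : (Real.sqrt (2 * Real.pi * (σ ^ 2 * T)))⁻¹
            * Real.exp (-(C ^ 2 / σ ^ 2) - 1) * s = c₀ := by
          rw [hsqrt, hc₀]
          field_simp
        calc c₀ = (Real.sqrt (2 * Real.pi * (σ ^ 2 * T)))⁻¹
              * Real.exp (-(C ^ 2 / σ ^ 2) - 1) * s := hfinal.symm
          _ ≤ ∫ y in Ioc (C - s) C, gd 0 (σ ^ 2 * T) y := by rw [smul_eq_mul] at h2; linarith
          _ ≤ Gl 0 (σ ^ 2 * T) C := h1
      -- upper bound on gd
      have hgub : gd 0 (σ ^ 2 * T) C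
          ≤ (Real.sqrt (2 * Real.pi) * (σ * Real.sqrt T))⁻¹ := by
        unfold gd
        have hsqrt : Real.sqrt (2 * Real.pi * (σ ^ 2 * T))
            = Real.sqrt (2 * Real.pi) * (σ * Real.sqrt T) := by
          rw [Real.sqrt_mul (by positivity), Real.sqrt_mul (sq_nonneg σ), Real.sqrt_sq hσ.le]
        rw [hsqrt]
        calc (Real.sqrt (2 * Real.pi) * (σ * Real.sqrt T))⁻¹
              * Real.exp (-(C - 0) ^ 2 / (2 * (σ ^ 2 * T)))
            ≤ (Real.sqrt (2 * Real.pi) * (σ * Real.sqrt T))⁻¹ * 1 := by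
              refine mul_le_mul_of_nonneg_left ?_ (by positivity)
              rw [Real.exp_le_one_iff]
              apply div_nonpos_of_nonpos_of_nonneg _ (by positivity)
              simp only [neg_nonpos]
              positivity
          _ = (Real.sqrt (2 * Real.pi) * (σ * Real.sqrt T))⁻¹ := by ring
      -- combine
      have hchain : σ ^ 2 * gd 0 (σ ^ 2 * T) C / Gl 0 (σ ^ 2 * T) C
          ≤ K / Real.sqrt T := by
        have hsT : 0 < Real.sqrt T := Real.sqrt_pos.mpr hT
        have step1 : σ ^ 2 * gd 0 (σ ^ 2 * T) C / Gl 0 (σ ^ 2 * T) C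
            ≤ σ ^ 2 * gd 0 (σ ^ 2 * T) C / c₀ :=
          div_le_div_of_nonneg_left (by positivity) hc₀pos hGlb
        have step2 : σ ^ 2 * gd 0 (σ ^ 2 * T) C / c₀
            ≤ σ ^ 2 * (Real.sqrt (2 * Real.pi) * (σ * Real.sqrt T))⁻¹ / c₀ := by
          exact div_le_div_of_nonneg_right
            (mul_le_mul_of_nonneg_left hgub (by positivity)) hc₀pos.le
        have step3 : σ ^ 2 * (Real.sqrt (2 * Real.pi) * (σ * Real.sqrt T))⁻¹ / c₀
            = K / Real.sqrt T := by
          rw [hK]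
          have h2π : (0:ℝ) < Real.sqrt (2 * Real.pi) := by positivity
          field_simp
        linarith
      simp only [zero_mul, zero_sub]
      exact neg_le_neg hchain
    · -- upper bound : condExp ≤ 0
      filter_upwards [eventually_gt_atTop (0:ℝ)] with T hT
      rw [condExp_formula hσ hT]
      have hv : (0:ℝ) < σ ^ 2 * T := by positivity
      have hG := Gl_pos hv 0 C
      have hg := gd_pos hv 0 C
      have : 0 ≤ σ ^ 2 * gd 0 (σ ^ 2 * T) C / Gl 0 (σ ^ 2 * T) C := by positivity
      simp only [zero_mul, zero_sub]
      linarith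
  · -- case 0 < ν
    have hTlin : Tendsto (fun T : ℝ => ν * T - C) atTop atTop := by
      have h1 : Tendsto (fun T : ℝ => ν * T) atTop atTop :=
        Tendsto.const_mul_atTop hν' tendsto_id
      have := tendsto_atTop_add_const_right atTop (-C) h1
      simpa [sub_eq_add_neg] using this
    have hCT : Tendsto (fun T : ℝ => C / T) atTop (nhds 0) :=
      Filter.Tendsto.div_atTop tendsto_const_nhds tendsto_id
    apply tendsto_of_tendsto_of_tendsto_of_le_of_le'
      (g := fun T : ℝ => C / T - σ ^ 2 / (ν * T - C)) (h := fun T : ℝ => C / T)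
    · have h2 : Tendsto (fun T : ℝ => σ ^ 2 / (ν * T - C)) atTop (nhds 0) :=
        Filter.Tendsto.div_atTop tendsto_const_nhds hTlin
      have := hCT.sub h2
      simpa using this
    · exact hCT
    · -- lower bound
      filter_upwards [eventually_gt_atTop (0:ℝ), eventually_ge_atTop ((|C| + 1) / ν)]
        with T hT hT2
      have hm1 : |C| + 1 ≤ ν * T := by
        rw [div_le_iff₀ hν'] at hT2
        linarith [hT2]
      have hC : C < ν * T := by
        have := le_abs_self C
        linarith
      have hv : (0:ℝ) < σ ^ 2 * T := by positivity
      rw [condExp_formula hσ hT]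
      set m := ν * T
      set v := σ ^ 2 * T with hvdef
      have hG := Gl_pos hv m C
      have hg := gd_pos hv m C
      have hmC : 0 < m - C := by linarith
      have hA : 0 < (m - C) * v / ((m - C) ^ 2 + v) * gd m v C := by positivity
      have h1 : σ ^ 2 * gd m v C / Gl m v C
          ≤ σ ^ 2 * gd m v C / ((m - C) * v / ((m - C) ^ 2 + v) * gd m v C) :=
        div_le_div_of_nonneg_left (by positivity) hA (Gl_ge hv hC)
      have h2 : σ ^ 2 * gd m v C / ((m - C) * v / ((m - C) ^ 2 + v) * gd m v C)
          = (m - C) / T + σ ^ 2 / (m - C) := by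
        rw [hvdef]
        have hg' : gd m (σ ^ 2 * T) C ≠ 0 := hg.ne'
        field_simp
      have heq : ν - (m - C) / T = C / T := by
        field_simp
        show ν * T - (ν * T - C) = C; ring
      have : σ ^ 2 * gd m v C / Gl m v C ≤ (m - C) / T + σ ^ 2 / (m - C) := by
        rw [← h2]; exact h1
      linarith
    · -- upper bound
      filter_upwards [eventually_gt_atTop (0:ℝ), eventually_ge_atTop ((|C| + 1) / ν)]
        with T hT hT2
      have hm1 : |C| + 1 ≤ ν * T := by
        rw [div_le_iff₀ hν'] at hT2
        linarith [hT2]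
      have hC : C < ν * T := by
        have := le_abs_self C
        linarith
      have hv : (0:ℝ) < σ ^ 2 * T := by positivity
      rw [condExp_formula hσ hT]
      set m := ν * T
      set v := σ ^ 2 * T with hvdef
      have hG := Gl_pos hv m C
      have hg := gd_pos hv m C
      have hmC : 0 < m - C := by linarith
      have hub : (m - C) / T ≤ σ ^ 2 * gd m v C / Gl m v C := by
        rw [div_le_div_iff₀ hT hG]
        have h1 := Gl_le hv hC
        have : v * gd m v C = σ ^ 2 * gd m v C * T := by rw [hvdef]; ring
        linarith
      have heq : ν - (m - C) / T = C / T := by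
        field_simp
        show ν * T - (ν * T - C) = C; ring
      linarith
end
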